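/- Uniqueness of the compatible nimrep for torus modular invariants: given a torus modular invariant Z with data (D_+, D_-, β), set E = ⋃_{[u]_+ ∈ D_+*/D_+} ([u]_+ ∩ β([u]_+)). Then E is a lattice with L ⊆ E ⊆ L*, and the nimrep with boundary states L*/E* (action by translation) is the unique nimrep (up to equivalence) whose exponent multiplicities equal the diagonal entries Z_{[μ],[μ]}. -/

import Mathlib

/-!
Since `N g * (N g)ᵀ = N 0 = 1` has entries in `ℕ`, every `N g` is a permutation matrix, so the
nimrep is a transitive action of the abelian group `L*/L` on `B`, i.e. translation on
`(L*/L)/K` for the common stabilizer `K`. A character of `L*` occurs as an eigenvalue of such a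
permutation representation iff it is trivial on the preimage of `K`, so compatibility with `Z`
forces the diagonal cosets of `Z` to form `E = H*`, where `H ⊆ L*` is the preimage of `K`.
As `L ⊆ H ⊆ L*` with `L*/L` finite, `H` is a full-rank lattice, hence `H** = H`, i.e. the
translation nimrep on `L*/E*` is the given one.
-/

open scoped BigOperators
open Complex

noncomputable section

/-- The Euclidean dot product on `Fin n → ℝ`. -/
def dotR {n : ℕ} (u v : Fin n → ℝ) : ℝ := ∑ i, u i * v i

lemma dotR_add_left {n : ℕ} (u v w : Fin n → ℝ) :
    dotR (u + v) w = dotR u w + dotR v w := by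
  simp [dotR, add_mul, Finset.sum_add_distrib]

lemma dotR_neg_left {n : ℕ} (u w : Fin n → ℝ) : dotR (-u) w = -dotR u w := by
  simp [dotR]

/-- `L` is an even lattice: `u ⬝ u ∈ 2ℤ` for all `u ∈ L`. -/
def IsEvenLattice {n : ℕ} (L : AddSubgroup (Fin n → ℝ)) : Prop :=
  ∀ u ∈ L, ∃ m : ℤ, dotR u u = 2 * m

/-- The dual lattice `L* = {x : x ⬝ L ⊆ ℤ}`. -/
def dualLattice {n : ℕ} (L : AddSubgroup (Fin n → ℝ)) : AddSubgroup (Fin n → ℝ) where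
  carrier := {x | ∀ l ∈ L, ∃ m : ℤ, dotR x l = m}
  zero_mem' := fun l _ => ⟨0, by simp [dotR]⟩
  add_mem' := by
    intro a b ha hb l hl
    obtain ⟨m, hm⟩ := ha l hl
    obtain ⟨m', hm'⟩ := hb l hl
    exact ⟨m + m', by rw [dotR_add_left, hm, hm']; push_cast; ring⟩
  neg_mem' := by
    intro a ha l hl
    obtain ⟨m, hm⟩ := ha l hl
    exact ⟨-m, by rw [dotR_neg_left, hm]; push_cast; ring⟩

/-- The group of primaries `L*/L`. -/
abbrev latQuot {n : ℕ} (L : AddSubgroup (Fin n → ℝ)) :=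
  dualLattice L ⧸ (L.addSubgroupOf (dualLattice L))

/-- The class of an element of `L*` in `L*/L`. -/
def mkQ {n : ℕ} (L : AddSubgroup (Fin n → ℝ)) (x : dualLattice L) : latQuot L :=
  QuotientAddGroup.mk x

/-- The S-matrix of the lattice chiral data:
`S_{[u],[v]} = |L*/L|^{-1/2} exp(2 π i u⬝v)`. -/
def Smat {n : ℕ} (L : AddSubgroup (Fin n → ℝ)) [Fintype (latQuot L)] :
    Matrix (latQuot L) (latQuot L) ℂ := fun x y =>
  (((Real.sqrt (Fintype.card (latQuot L)))⁻¹ : ℝ) : ℂ) *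
    Complex.exp (2 * Real.pi * Complex.I *
      (dotR ((Quotient.out x : dualLattice L) : Fin n → ℝ)
            ((Quotient.out y : dualLattice L) : Fin n → ℝ)))

/-- `D_+ = {[d] : Z_{[d],[0]} = 1}` (at the level of `L*/L`). -/
def DpSet {n : ℕ} (L : AddSubgroup (Fin n → ℝ))
    (Z : latQuot L → latQuot L → ℕ) : Set (latQuot L) := {x | Z x 0 = 1}

/-- `D_- = {[d] : Z_{[0],[d]} = 1}` (at the level of `L*/L`). -/
def DmSet {n : ℕ} (L : AddSubgroup (Fin n → ℝ))
    (Z : latQuot L → latQuot L → ℕ) : Set (latQuot L) := {y | Z 0 y = 1}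

/-- Integrality of the pairing of two classes in `L*/L` (well defined modulo
`L` because `L ⬝ L* ⊆ ℤ`). -/
def pInt {n : ℕ} (L : AddSubgroup (Fin n → ℝ)) (x y : latQuot L) : Prop :=
  ∃ m : ℤ, dotR ((Quotient.out x : dualLattice L) : Fin n → ℝ)
               ((Quotient.out y : dualLattice L) : Fin n → ℝ) = m

/-- The classes in `L*/L` of elements of `D_±^*`. -/
def DpStar {n : ℕ} (L : AddSubgroup (Fin n → ℝ))
    (Z : latQuot L → latQuot L → ℕ) : Set (latQuot L) :=
  {x | ∀ d ∈ DpSet L Z, pInt L x d}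

def DmStar {n : ℕ} (L : AddSubgroup (Fin n → ℝ))
    (Z : latQuot L → latQuot L → ℕ) : Set (latQuot L) :=
  {x | ∀ d ∈ DmSet L Z, pInt L x d}


/-- The subgroup of `L*` of vectors pairing integrally with `E`. -/
def intAgainst {n : ℕ} (L E : AddSubgroup (Fin n → ℝ)) :
    AddSubgroup (dualLattice L) where
  carrier := {m | ∀ e ∈ E, ∃ z : ℤ, dotR (m : Fin n → ℝ) e = z}
  zero_mem' := fun e _ => ⟨0, by simp [dotR]⟩
  add_mem' := by
    intro a b ha hb e he
    obtain ⟨z, hz⟩ := ha e he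
    obtain ⟨z', hz'⟩ := hb e he
    refine ⟨z + z', ?_⟩
    push_cast
    rw [dotR_add_left, hz, hz']
  neg_mem' := by
    intro a ha e he
    obtain ⟨z, hz⟩ := ha e he
    refine ⟨-z, ?_⟩
    push_cast
    rw [dotR_neg_left, hz]

/-- The subgroup `E*/L` of `L*/L` (the kernel of the translation nimrep with
exponents `E/L`). -/
def Kdual {n : ℕ} (L E : AddSubgroup (Fin n → ℝ)) : AddSubgroup (latQuot L) :=
  AddSubgroup.map (QuotientAddGroup.mk' (L.addSubgroupOf (dualLattice L)))
    (intAgainst L E)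

theorem Matrix.exists_row_eq_single_of_mul_transpose_eq_one {B : Type*} [Fintype B]
    [DecidableEq B] {M : Matrix B B ℕ} (h : M * M.transpose = 1) (x : B) :
    ∃ y, M x = Pi.single y 1 := by
  have hsum : ∑ z, M x z * M x z = 1 := by
    simpa [Matrix.mul_apply] using congr_fun₂ h x x
  obtain ⟨y, -, hy⟩ := Finset.exists_ne_zero_of_sum_ne_zero (hsum ▸ one_ne_zero)
  rw [← Finset.add_sum_erase _ _ (Finset.mem_univ y)] at hsum
  have hy1 : M x y * M x y = 1 := by omega
  have hrest : ∑ z ∈ Finset.univ.erase y, M x z * M x z = 0 := by omega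
  refine ⟨y, funext fun z => ?_⟩
  by_cases hzy : z = y
  · subst hzy
    simpa using Nat.eq_one_of_mul_eq_one_right hy1
  · simpa [hzy] using Finset.sum_eq_zero_iff.1 hrest z (by simp [hzy])

structure IsGroupNimrep {G B : Type*} [AddGroup G] [Fintype B] [DecidableEq B]
    (N : G → Matrix B B ℕ) : Prop where
  map_zero : N 0 = 1
  map_add : ∀ u v, N u * N v = N (u + v)
  map_neg : ∀ u, N (-u) = (N u).transpose

namespace IsGroupNimrep

variable {G B : Type*} [Fintype B] [DecidableEq B] {N : G → Matrix B B ℕ}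

section AddGroup

variable [AddGroup G] (hN : IsGroupNimrep N)
include hN

theorem exists_row_eq_single (g : G) (x : B) : ∃ y, N g x = Pi.single y 1 :=
  Matrix.exists_row_eq_single_of_mul_transpose_eq_one
    (by rw [← hN.map_neg, hN.map_add, add_neg_cancel, hN.map_zero]) x

def act (g : G) (x : B) : B := (hN.exists_row_eq_single g x).choose

theorem apply_eq_ite (g : G) (x y : B) : N g x y = if hN.act g x = y then 1 else 0 := by
  rw [(hN.exists_row_eq_single g x).choose_spec, Pi.single_apply]
  exact if_congr eq_comm rfl rfl

theorem apply_ne_zero_iff (g : G) (x y : B) : N g x y ≠ 0 ↔ hN.act g x = y := by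
  rw [hN.apply_eq_ite]
  split_ifs <;> simp_all

end AddGroup

abbrev toAddAction [AddCommGroup G] (hN : IsGroupNimrep N) : AddAction G B where
  vadd := hN.act
  zero_vadd x := (hN.apply_ne_zero_iff 0 x x).1 (by simp [hN.map_zero])
  add_vadd g h x := by
    change hN.act (g + h) x = hN.act g (hN.act h x)
    rw [← hN.apply_ne_zero_iff, add_comm, ← hN.map_add, Matrix.mul_apply,
      Finset.sum_eq_single (hN.act h x)]
    · simp [hN.apply_eq_ite]
    · intro y _ hy
      simp [hN.apply_eq_ite, Ne.symm hy]
    · simp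

end IsGroupNimrep

namespace AddAction

def equivQuotientStabilizer (G : Type*) {X : Type*} [AddGroup G] [AddAction G X]
    [IsPretransitive G X] (x₀ : X) : X ≃ G ⧸ stabilizer G x₀ :=
  (Equiv.ofBijective (ofQuotientStabilizer G x₀) ⟨injective_ofQuotientStabilizer G x₀,
    fun x => (exists_vadd_eq G x₀ x).elim fun g hg => ⟨g, hg⟩⟩).symm

variable {G X : Type*} [AddCommGroup G] [AddAction G X]

theorem vadd_eq_self_of_mem_stabilizer [IsPretransitive G X] {x₀ : X} {g : G}
    (hg : g ∈ stabilizer G x₀) (x : X) : g +ᵥ x = x := by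
  obtain ⟨h, rfl⟩ := exists_vadd_eq G x₀ x
  rw [vadd_comm, mem_stabilizer_iff.1 hg]

theorem vadd_eq_iff_mk_add_equivQuotientStabilizer [IsPretransitive G X] (x₀ : X) (g : G)
    (x y : X) :
    g +ᵥ x = y ↔ (g : G ⧸ stabilizer G x₀) + equivQuotientStabilizer G x₀ x =
      equivQuotientStabilizer G x₀ y := by
  set e := equivQuotientStabilizer G x₀
  have he : ∀ q, e.symm (g + q) = g +ᵥ e.symm q := by
    intro q
    induction q using QuotientAddGroup.induction_on with
    | H h => exact add_vadd g h x₀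
  rw [← e.symm.injective.eq_iff, he, e.symm_apply_apply, e.symm_apply_apply]

variable [Fintype X] [DecidableEq X] {N : G → Matrix X X ℕ}
  (hN : ∀ g x y, N g x y = if g +ᵥ x = y then 1 else 0)
include hN

theorem sum_natCast_mul_eq_of_eq_ite {R : Type*} [Semiring R] (g : G) (x : X) (v : X → R) :
    ∑ y, (N g x y : R) * v y = v (g +ᵥ x) := by
  simp [hN]

theorem exists_eigenvector_iff [IsPretransitive G X] {A : Type*} [AddGroup A] {π : A →+ G}
    (hπ : Function.Surjective π) (ψ : AddChar A ℂ) (x₀ : X) :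
    (∃ v : X → ℂ, v ≠ 0 ∧ ∀ u x, ∑ y, (N (π u) x y : ℂ) * v y = ψ u * v x) ↔
      ∀ u, π u ∈ stabilizer G x₀ → ψ u = 1 := by
  simp only [sum_natCast_mul_eq_of_eq_ite hN]
  constructor
  · rintro ⟨v, hv0, hv⟩ u hu
    obtain ⟨x, hx⟩ := Function.ne_iff.1 hv0
    have hvx := hv u x
    rw [vadd_eq_self_of_mem_stabilizer hu] at hvx
    exact (mul_eq_right₀ hx).1 hvx.symm
  · intro hψ
    have hs : ∀ x, ∃ a, π a +ᵥ x₀ = x := fun x =>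
      (exists_vadd_eq G x₀ x).elim fun g hg => (hπ g).imp fun a ha => by rw [ha]; exact hg
    choose s hs using hs
    refine ⟨fun x => ψ (s x), fun h => (ψ.val_isUnit (s x₀)).ne_zero (congr_fun h x₀), ?_⟩
    intro u x
    set d := s (π u +ᵥ x) - (u + s x)
    have hd : π d ∈ stabilizer G x₀ := by
      have h : π (s (π u +ᵥ x)) +ᵥ x₀ = (π u + π (s x)) +ᵥ x₀ := by rw [hs, add_vadd, hs]
      rw [mem_stabilizer_iff, map_sub, map_add, sub_eq_neg_add, add_vadd, h, neg_vadd_vadd]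
    change ψ (s (π u +ᵥ x)) = ψ u * ψ (s x)
    rw [← sub_add_cancel (s (π u +ᵥ x)) (u + s x), AddChar.map_add_eq_mul, hψ d hd, one_mul,
      AddChar.map_add_eq_mul]

end AddAction

section Lattice

open Matrix

variable {n : ℕ}

theorem dotR_eq_dotProduct (u v : Fin n → ℝ) : dotR u v = u ⬝ᵥ v := rfl

theorem dotR_comm (u v : Fin n → ℝ) : dotR u v = dotR v u := dotProduct_comm u v

theorem dualLattice_antitone : Antitone (dualLattice (n := n)) :=
  fun _ _ h _ hx l hl => hx l (h hl)

theorem le_dualLattice_comm {M M' : AddSubgroup (Fin n → ℝ)} :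
    M ≤ dualLattice M' ↔ M' ≤ dualLattice M := by
  suffices ∀ {M M' : AddSubgroup (Fin n → ℝ)}, M ≤ dualLattice M' → M' ≤ dualLattice M from
    ⟨this, this⟩
  exact fun h y hy x hx => (h hx y hy).imp fun m hm => dotR_comm y x ▸ hm

theorem discreteTopology_of_le_dotR_self {M : AddSubgroup (Fin n → ℝ)} {ε : ℝ} (hε : 0 < ε)
    (h : ∀ x ∈ M, x ≠ 0 → ε ≤ dotR x x) : DiscreteTopology M := by
  rw [discreteTopology_iff_isOpen_singleton_zero, isOpen_induced_iff]
  refine ⟨{x | dotR x x < ε}, isOpen_lt (by unfold dotR; fun_prop) continuous_const, ?_⟩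
  ext ⟨x, hx⟩
  simp only [Set.mem_preimage, Set.mem_singleton_iff, AddSubgroup.mk_eq_zero]
  refine ⟨fun hlt => by_contra fun hx0 => (h x hx hx0).not_gt hlt, ?_⟩
  rintro rfl
  simpa [dotR] using hε

theorem card_smul_mem {L : AddSubgroup (Fin n → ℝ)} {x : Fin n → ℝ} (hx : x ∈ dualLattice L) :
    (Nat.card (latQuot L) : ℝ) • x ∈ L := by
  have h : (Nat.card (latQuot L) • ⟨x, hx⟩ : dualLattice L) ∈ L.addSubgroupOf (dualLattice L) :=
    (QuotientAddGroup.eq_zero_iff _).1 <| by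
      rw [QuotientAddGroup.mk_nsmul]; exact card_nsmul_eq_zero'
  simpa [AddSubgroup.mem_addSubgroupOf, Nat.cast_smul_eq_nsmul] using h

theorem span_eq_top_of_finite_latQuot {L : AddSubgroup (Fin n → ℝ)} [Finite (latQuot L)] :
    Submodule.span ℝ (L : Set (Fin n → ℝ)) = ⊤ := by
  by_contra hL
  obtain ⟨f, hf0, hfL⟩ :=
    Submodule.exists_dual_map_eq_bot_of_lt_top (lt_top_iff_ne_top.2 hL) inferInstance
  set x := (dotProductEquiv ℝ (Fin n)).symm f
  have hxf : ∀ y, dotR x y = f y := fun y =>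
    congr($((dotProductEquiv ℝ (Fin n)).apply_symm_apply f) y)
  have hfL' : ∀ l ∈ L, f l = 0 := fun l hl =>
    (Submodule.eq_bot_iff _).1 hfL (f l) (Submodule.mem_map_of_mem (Submodule.subset_span hl))
  -- `x ⊥ L` puts the whole line `ℝ x` inside `L*`, and `|L*/L| • L* ⊆ L` then gives `x ∈ L`.
  have hdual : ∀ t : ℝ, t • x ∈ dualLattice L := fun t l hl =>
    ⟨0, by rw [dotR_eq_dotProduct, smul_dotProduct, ← dotR_eq_dotProduct, hxf, hfL' l hl]; simp⟩
  have hc : (Nat.card (latQuot L) : ℝ) ≠ 0 := by exact_mod_cast Nat.card_pos.ne'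
  have hxL : x ∈ L := by
    simpa [smul_smul, hc] using card_smul_mem (hdual (Nat.card (latQuot L) : ℝ)⁻¹)
  have hx0 : x = 0 := dotProduct_self_eq_zero.1 (by rw [← dotR_eq_dotProduct, hxf, hfL' x hxL])
  exact hf0 ((dotProductEquiv ℝ (Fin n)).symm.map_eq_zero_iff.1 hx0)

theorem discreteTopology_dualLattice {L : AddSubgroup (Fin n → ℝ)} (hLL : L ≤ dualLattice L)
    [Finite (latQuot L)] : DiscreteTopology (dualLattice L) := by
  set c : ℝ := (Nat.card (latQuot L) : ℝ)
  have hc : 0 < c := Nat.cast_pos.2 Nat.card_pos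
  refine discreteTopology_of_le_dotR_self (ε := (c ^ 2)⁻¹) (by positivity) fun x hx hx0 => ?_
  have hcx : c • x ∈ L := card_smul_mem hx
  obtain ⟨m, hm⟩ := hLL hcx (c • x) hcx
  have hm_pos : (0 : ℤ) < m := by
    rw [← Int.cast_pos (R := ℝ), ← hm]
    simpa [dotR_eq_dotProduct] using dotProduct_self_star_pos_iff.2 (smul_ne_zero hc.ne' hx0)
  have hscale : dotR (c • x) (c • x) = dotR x x * c ^ 2 := by
    simp only [dotR_eq_dotProduct, smul_dotProduct, dotProduct_smul, smul_eq_mul]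
    ring
  rw [inv_le_iff_one_le_mul₀ (by positivity), ← hscale, hm]
  exact_mod_cast hm_pos

def dotForm (n : ℕ) : LinearMap.BilinForm ℝ (Fin n → ℝ) := dotProductBilin ℝ ℝ

theorem dotForm_apply (u v : Fin n → ℝ) : dotForm n u v = dotR u v := rfl

theorem dotForm_nondegenerate : (dotForm n).Nondegenerate :=
  ⟨fun x hx => dotProduct_self_eq_zero.1 (hx x), fun x hx => dotProduct_self_eq_zero.1 (hx x)⟩

theorem dotForm_isSymm : (dotForm n).IsSymm := ⟨fun u v => dotProduct_comm u v⟩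

theorem toIntSubmodule_dualLattice (M : AddSubgroup (Fin n → ℝ)) :
    (dualLattice M).toIntSubmodule = (dotForm n).dualSubmodule M.toIntSubmodule := by
  ext x
  simp only [LinearMap.BilinForm.mem_dualSubmodule, Submodule.mem_one, dotForm_apply]
  exact forall₂_congr fun _ _ => exists_congr fun _ => eq_comm

theorem dualLattice_dualLattice_of_discreteTopology {M : AddSubgroup (Fin n → ℝ)}
    [DiscreteTopology M] (hM : Submodule.span ℝ (M : Set (Fin n → ℝ)) = ⊤) :
    dualLattice (dualLattice M) = M := by
  have : DiscreteTopology M.toIntSubmodule := ‹DiscreteTopology M›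
  have : IsZLattice ℝ M.toIntSubmodule := ⟨hM⟩
  have := ZLattice.module_free ℝ M.toIntSubmodule
  have := ZLattice.module_finite ℝ M.toIntSubmodule
  apply AddSubgroup.toIntSubmodule.injective
  rw [toIntSubmodule_dualLattice, toIntSubmodule_dualLattice,
    ← (Module.Free.chooseBasis ℤ M.toIntSubmodule).ofZLatticeBasis_span ℝ M.toIntSubmodule,
    (dotForm n).dualSubmodule_dualSubmodule_of_basis dotForm_nondegenerate dotForm_isSymm]

theorem dualLattice_dualLattice_of_le {L H : AddSubgroup (Fin n → ℝ)} (hLL : L ≤ dualLattice L)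
    [Finite (latQuot L)] (hLH : L ≤ H) (hH : H ≤ dualLattice L) :
    dualLattice (dualLattice H) = H := by
  have := DiscreteTopology.of_subset (discreteTopology_dualLattice hLL) hH
  refine dualLattice_dualLattice_of_discreteTopology (top_le_iff.1 ?_)
  exact span_eq_top_of_finite_latQuot (L := L) ▸ Submodule.span_mono hLH

def quotPreimage (L : AddSubgroup (Fin n → ℝ)) (K : AddSubgroup (latQuot L)) :
    AddSubgroup (Fin n → ℝ) :=
  (K.comap (QuotientAddGroup.mk' _)).map (dualLattice L).subtype

section quotPreimage

variable {L : AddSubgroup (Fin n → ℝ)} {K : AddSubgroup (latQuot L)}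

theorem quotPreimage_le_dualLattice : quotPreimage L K ≤ dualLattice L := by
  rintro _ ⟨w, -, rfl⟩
  exact w.2

theorem le_quotPreimage (hLL : L ≤ dualLattice L) : L ≤ quotPreimage L K := by
  intro l hl
  refine ⟨⟨l, hLL hl⟩, ?_, rfl⟩
  have : (⟨l, hLL hl⟩ : dualLattice L) ∈ L.addSubgroupOf (dualLattice L) := hl
  simp [(QuotientAddGroup.eq_zero_iff _).2 this, K.zero_mem]

theorem mem_dualLattice_quotPreimage {x : Fin n → ℝ} :
    x ∈ dualLattice (quotPreimage L K) ↔
      ∀ w : dualLattice L, mkQ L w ∈ K → ∃ z : ℤ, dotR x w = z := by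
  refine ⟨fun hx w hw => hx w ⟨w, hw, rfl⟩, ?_⟩
  rintro hx _ ⟨w, hw, rfl⟩
  exact hx w hw

theorem Kdual_dualLattice_quotPreimage (hLL : L ≤ dualLattice L) [Finite (latQuot L)] :
    Kdual L (dualLattice (quotPreimage L K)) = K := by
  have hint : ∀ E, intAgainst L E = (dualLattice E).addSubgroupOf (dualLattice L) := fun _ => rfl
  rw [Kdual, hint, dualLattice_dualLattice_of_le hLL (le_quotPreimage hLL)
    quotPreimage_le_dualLattice, ← AddSubgroup.comap_subtype (quotPreimage L K), quotPreimage,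
    AddSubgroup.comap_map_eq_self_of_injective (dualLattice L).subtype_injective,
    AddSubgroup.map_comap_eq_self_of_surjective (QuotientAddGroup.mk'_surjective _)]

end quotPreimage

def expDotChar (M : AddSubgroup (Fin n → ℝ)) (e : Fin n → ℝ) : AddChar M ℂ where
  toFun u := Complex.exp (2 * Real.pi * Complex.I * dotR e u)
  map_zero_eq_one' := by simp [dotR]
  map_add_eq_mul' a b := by
    simp only [AddSubgroup.coe_add, dotR_eq_dotProduct, dotProduct_add]
    push_cast
    rw [mul_add, Complex.exp_add]

theorem expDotChar_apply (M : AddSubgroup (Fin n → ℝ)) (e : Fin n → ℝ) (u : M) :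
    expDotChar M e u = Complex.exp (2 * Real.pi * Complex.I * dotR e u) := rfl

theorem expDotChar_eq_one_iff {M : AddSubgroup (Fin n → ℝ)} {e : Fin n → ℝ} {u : M} :
    expDotChar M e u = 1 ↔ ∃ z : ℤ, dotR e u = z := by
  change Complex.exp _ = 1 ↔ _
  rw [Complex.exp_eq_one_iff]
  refine exists_congr fun z => ?_
  rw [mul_comm, mul_left_inj' Complex.two_pi_I_ne_zero]
  exact_mod_cast Iff.rfl

end Lattice

theorem stmt_7_general {n : ℕ} (L : AddSubgroup (Fin n → ℝ))
    (hLL : L ≤ dualLattice L)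
    [Fintype (latQuot L)]
    (Z : latQuot L → latQuot L → ℕ)
    -- the data `(D_+, D_-, β)` classifying the modular invariant `Z`
    (β : latQuot L → latQuot L)
    (hβ : ∀ u v, Z u v = 1 ↔ (u ∈ DpStar L Z ∧ v - β u ∈ DmSet L Z))
    -- a nimrep ...
    (B : Type) [Fintype B] [DecidableEq B] [Nonempty B]
    (N : latQuot L → Matrix B B ℕ)
    (hone : N 0 = 1)
    (hmul : ∀ u v, N u * N v = N (u + v))
    (htr : ∀ u, N (-u) = (N u).transpose)
    (hindec : ∀ x y : B, ∃ u, N u x y ≠ 0)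
    -- ... compatible with `Z`: the exponents of the nimrep are exactly the
    -- diagonal of `Z` (each diagonal entry being `0` or `1` here)
    (hcomp : ∀ e : dualLattice L,
      ((∃ v : B → ℂ, v ≠ 0 ∧ ∀ (u : dualLattice L) (x : B),
          ∑ y, (N (mkQ L u) x y : ℂ) * v y
            = Complex.exp (2 * Real.pi * Complex.I *
                dotR (e : Fin n → ℝ) (u : Fin n → ℝ)) * v x)
        ↔ Z (mkQ L e) (mkQ L e) = 1)) :
    ∃ E : AddSubgroup (Fin n → ℝ), L ≤ E ∧ E ≤ dualLattice L ∧
      -- `E` is the union over `[u]_+ ∈ D_+^*/D_+` of `[u]_+ ∩ β([u]_+)`,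
      -- i.e. the union of the diagonal cosets of `Z`
      (∀ x : dualLattice L, ((x : Fin n → ℝ) ∈ E ↔
          (mkQ L x ∈ DpStar L Z ∧ mkQ L x - β (mkQ L x) ∈ DmSet L Z))) ∧
      -- the given nimrep is equivalent to the translation nimrep on `L*/E*`
      ∃ φ : B ≃ (latQuot L ⧸ Kdual L E),
        ∀ (u : latQuot L) (x y : B),
          N u x y ≠ 0 ↔ QuotientAddGroup.mk' (Kdual L E) u + φ x = φ y := by
  have hN : IsGroupNimrep N := ⟨hone, hmul, htr⟩
  let := hN.toAddAction
  have : AddAction.IsPretransitive (latQuot L) B :=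
    ⟨fun x y => (hindec x y).imp fun u hu => (hN.apply_ne_zero_iff u x y).1 hu⟩
  obtain ⟨x₀⟩ := ‹Nonempty B›
  set K := AddAction.stabilizer (latQuot L) x₀
  have hexp (e : dualLattice L) :
      (e : Fin n → ℝ) ∈ dualLattice (quotPreimage L K) ↔ Z (mkQ L e) (mkQ L e) = 1 := by
    rw [mem_dualLattice_quotPreimage, ← hcomp e]
    simp only [← expDotChar_apply, mkQ, ← QuotientAddGroup.mk'_apply]
    rw [AddAction.exists_eigenvector_iff hN.apply_eq_ite (QuotientAddGroup.mk'_surjective _)]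
    simp only [expDotChar_eq_one_iff]
    rfl
  refine ⟨dualLattice (quotPreimage L K), le_dualLattice_comm.2 quotPreimage_le_dualLattice,
    dualLattice_antitone (le_quotPreimage hLL), fun x => (hexp x).trans (hβ _ _), ?_⟩
  rw [Kdual_dualLattice_quotPreimage hLL]
  exact ⟨AddAction.equivQuotientStabilizer _ x₀, fun u x y => (hN.apply_ne_zero_iff u x y).trans
    (AddAction.vadd_eq_iff_mk_add_equivQuotientStabilizer x₀ u x y)⟩

theorem stmt_7 {n : ℕ} (L : AddSubgroup (Fin n → ℝ))
    (hEven : IsEvenLattice L) (hLL : L ≤ dualLattice L)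
    [Fintype (latQuot L)]
    (Z : latQuot L → latQuot L → ℕ)
    (hZS : (Matrix.of fun x y => (Z x y : ℂ)) * Smat L
          = Smat L * Matrix.of fun x y => (Z x y : ℂ))
    (hZ0 : Z 0 0 = 1)
    (h01 : ∀ x y, Z x y = 0 ∨ Z x y = 1)
    (hadd : ∀ u v u' v' : latQuot L,
      Z u v = 1 → Z u' v' = 1 → Z (u + u') (v + v') = 1)
    -- the data `(D_+, D_-, β)` classifying the modular invariant `Z`
    (β : latQuot L → latQuot L)
    (hβ : ∀ u v, Z u v = 1 ↔ (u ∈ DpStar L Z ∧ v - β u ∈ DmSet L Z))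
    -- a nimrep ...
    (B : Type) [Fintype B] [DecidableEq B] [Nonempty B]
    (N : latQuot L → Matrix B B ℕ)
    (hone : N 0 = 1)
    (hmul : ∀ u v, N u * N v = N (u + v))
    (htr : ∀ u, N (-u) = (N u).transpose)
    (hindec : ∀ x y : B, ∃ u, N u x y ≠ 0)
    -- ... compatible with `Z`: the exponents of the nimrep are exactly the
    -- diagonal of `Z` (each diagonal entry being `0` or `1` here)
    (hcomp : ∀ e : dualLattice L,
      ((∃ v : B → ℂ, v ≠ 0 ∧ ∀ (u : dualLattice L) (x : B),
          ∑ y, (N (mkQ L u) x y : ℂ) * v y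
            = Complex.exp (2 * Real.pi * Complex.I *
                dotR (e : Fin n → ℝ) (u : Fin n → ℝ)) * v x)
        ↔ Z (mkQ L e) (mkQ L e) = 1)) :
    ∃ E : AddSubgroup (Fin n → ℝ), L ≤ E ∧ E ≤ dualLattice L ∧
      -- `E` is the union over `[u]_+ ∈ D_+^*/D_+` of `[u]_+ ∩ β([u]_+)`,
      -- i.e. the union of the diagonal cosets of `Z`
      (∀ x : dualLattice L, ((x : Fin n → ℝ) ∈ E ↔
          (mkQ L x ∈ DpStar L Z ∧ mkQ L x - β (mkQ L x) ∈ DmSet L Z))) ∧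
      -- the given nimrep is equivalent to the translation nimrep on `L*/E*`
      ∃ φ : B ≃ (latQuot L ⧸ Kdual L E),
        ∀ (u : latQuot L) (x y : B),
          N u x y ≠ 0 ↔ QuotientAddGroup.mk' (Kdual L E) u + φ x = φ y :=
  stmt_7_general L hLL Z β hβ B N hone hmul htr hindec hcomp

end
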